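/- Let (Γ,w) be a stable weighted graph of genus g ≥ 2. Then (Γ,w) is weakly (g−1)-general if and only if (Γ,w) is tree-like, i.e. every edge of Γ joining two distinct vertices is a bridge. -/

import Mathlib

open Finset

noncomputable section
open scoped Classical

variable {V : Type} [Fintype V] [DecidableEq V]

/-- The simple graph underlying a multigraph with multiplicity function `k`:
`u` and `v` are adjacent iff `u ≠ v` and some edge joins them. -/
def graphOf (k : V → V → ℕ) : SimpleGraph V where
  Adj u v := u ≠ v ∧ (0 < k u v ∨ 0 < k v u)
  symm := ⟨fun u v h => ⟨h.1.symm, h.2.symm⟩⟩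
  loopless := ⟨fun v h => h.1 rfl⟩

/-- The number of edges of a multigraph: loops plus half the ordered count. -/
def numEdges (k : V → V → ℕ) : ℕ :=
  (∑ v, k v v) + (∑ u, ∑ v ∈ Finset.univ.erase u, k u v) / 2

/-- The genus of a weighted graph: `∑ w(v) + b₁`, with `b₁ = #E - #V + 1`. -/
def genus (k : V → V → ℕ) (w : V → ℕ) : ℤ :=
  (∑ v, (w v : ℤ)) + ((numEdges k : ℤ) - (Fintype.card V : ℤ) + 1)

/-- Stability: connected, and each weight-zero vertex has valency at least 3. -/
def IsStable (k : V → V → ℕ) (w : V → ℕ) : Prop :=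
  (graphOf k).Connected ∧
    ∀ v, w v = 0 → 3 ≤ 2 * k v v + ∑ u ∈ Finset.univ.erase v, k u v

/-- `δ_A`: the number of edges joining `A` to its complement. -/
def deltaA (k : V → V → ℕ) (A : Finset V) : ℤ :=
  ∑ u ∈ A, ∑ v ∈ Aᶜ, (k u v : ℤ)

/-- `w_A = Σ_{v∈A} (2w(v) − 2 + 2k(v,v) + Σ_{u≠v} k(u,v))`. -/
def wA (k : V → V → ℕ) (w : V → ℕ) (A : Finset V) : ℤ :=
  ∑ v ∈ A, (2 * (w v : ℤ) - 2 + 2 * (k v v : ℤ) + ∑ u ∈ Finset.univ.erase v, (k u v : ℤ))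

/-- `d_A`: the total degree of a multidegree on the subset `A`. -/
def degA (d : V → ℤ) (A : Finset V) : ℤ := ∑ v ∈ A, d v

/-- `m_A(d) = d·w_A/(2g−2) − δ_A/2 ∈ ℚ`. -/
def mA (k : V → V → ℕ) (w : V → ℕ) (D : ℤ) (A : Finset V) : ℚ :=
  (D : ℚ) * (wA k w A : ℚ) / ((2 * genus k w - 2 : ℤ) : ℚ) - (deltaA k A : ℚ) / 2

/-- A balanced multidegree of total degree `D`. -/
def IsBalanced (k : V → V → ℕ) (w : V → ℕ) (D : ℤ) (d : V → ℤ) : Prop :=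
  degA d Finset.univ = D ∧ ∀ A : Finset V, mA k w D A ≤ (degA d A : ℚ)

/-- A strictly balanced multidegree of total degree `D`. -/
def IsStrictlyBalanced (k : V → V → ℕ) (w : V → ℕ) (D : ℤ) (d : V → ℤ) : Prop :=
  IsBalanced k w D d ∧
    ∀ A : Finset V, A ≠ ∅ → A ≠ Finset.univ → mA k w D A < (degA d A : ℚ)

/-- `(Γ,w)` is `d`-general if every balanced multidegree of total degree `d`
is strictly balanced. -/
def IsDGeneral (k : V → V → ℕ) (w : V → ℕ) (D : ℤ) : Prop :=
  ∀ d : V → ℤ, IsBalanced k w D d → IsStrictlyBalanced k w D d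

/-- The generator `c_v` of the lattice `Λ`. -/
def cvec (k : V → V → ℕ) (v : V) : V → ℤ := fun u =>
  if u = v then -(∑ x ∈ Finset.univ.erase v, (k x v : ℤ)) else (k u v : ℤ)

/-- The lattice `Λ ⊆ ℤ^V` generated by the `c_v`. -/
def Lambda (k : V → V → ℕ) : AddSubgroup (V → ℤ) :=
  AddSubgroup.closure (Set.range (cvec k))

/-- The total-degree homomorphism `ℤ^V → ℤ`. -/
def sumHom (V : Type) [Fintype V] : (V → ℤ) →+ ℤ :=
  { toFun := fun d => ∑ v, d v
    map_zero' := by simp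
    map_add' := fun a b => by simp [Finset.sum_add_distrib] }

/-- `Z = {d ∈ ℤ^V : Σ_v d(v) = 0}`. -/
def Zsub (V : Type) [Fintype V] : AddSubgroup (V → ℤ) := (sumHom V).ker

/-- Remove the edge(s) joining `a` and `b` from the multigraph. -/
def removeEdge (k : V → V → ℕ) (a b : V) : V → V → ℕ := fun u v =>
  if (u = a ∧ v = b) ∨ (u = b ∧ v = a) then 0 else k u v

/-- `a`–`b` is a bridge: a single non-loop edge whose removal disconnects the graph. -/
def IsBridge (k : V → V → ℕ) (a b : V) : Prop :=
  a ≠ b ∧ k a b = 1 ∧ ¬ (graphOf (removeEdge k a b)).Connected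

/-- `A` induces a connected sub-multigraph. -/
def IsConnectedSubset (k : V → V → ℕ) (A : Finset V) : Prop :=
  ((graphOf k).induce (A : Set V)).Connected

/-- The equivalence relation `≈` on `V` generated by bridges. -/
def contractSetoid (k : V → V → ℕ) : Setoid V :=
  ⟨Relation.EqvGen (fun u v => IsBridge k u v), Relation.EqvGen.is_equivalence _⟩

/-- The vertex set `V² = V/≈` of the contracted graph `Γ²`. -/
def V2 (k : V → V → ℕ) : Type := Quotient (contractSetoid k)

instance (k : V → V → ℕ) : Finite (V2 k) := Quotient.finite _

instance (k : V → V → ℕ) : Fintype (V2 k) := Fintype.ofFinite _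

/-- The fiber of the quotient map `φ : V → V²` over a class `c`. -/
def fiber (k : V → V → ℕ) (c : V2 k) : Finset V :=
  Finset.univ.filter (fun v => Quotient.mk (contractSetoid k) v = c)

/-- The multiplicity function `k²` of the contracted graph `Γ²`. -/
def k2 (k : V → V → ℕ) : V2 k → V2 k → ℕ := fun c c' =>
  if c = c' then
    (∑ v ∈ fiber k c, k v v) +
      (∑ u ∈ fiber k c, ∑ v ∈ (fiber k c).erase u,
        if IsBridge k u v then 0 else k u v) / 2
  else ∑ u ∈ fiber k c, ∑ v ∈ fiber k c', k u v

/-- The weight function `w²` of the contracted weighted graph `(Γ²,w²)`. -/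
def w2 (k : V → V → ℕ) (w : V → ℕ) : V2 k → ℕ := fun c => ∑ v ∈ fiber k c, w v

/-- The pushforward `α(d)` of a multidegree to the contracted graph. -/
def alphaMap (k : V → V → ℕ) (d : V → ℤ) : V2 k → ℤ := fun c => ∑ v ∈ fiber k c, d v

/-- The setoid on multidegrees of total degree `D`: two are equivalent if their
difference lies in `Λ`; the quotient is `Δ^d`. -/
def degSetoid (k : V → V → ℕ) (D : ℤ) : Setoid {d : V → ℤ // (∑ v, d v) = D} :=
  ⟨fun a b => (a : V → ℤ) - (b : V → ℤ) ∈ Lambda k, by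
    constructor
    · intro a; simpa using (Lambda k).zero_mem
    · intro a b h; have h2 := (Lambda k).neg_mem h; rwa [neg_sub] at h2
    · intro a b c h1 h2
      have h3 := (Lambda k).add_mem h1 h2
      rwa [sub_add_sub_cancel] at h3⟩

/-- Number of edges of the sub-multigraph induced on `A`. -/
def numEdgesIn (k : V → V → ℕ) (A : Finset V) : ℕ :=
  (∑ v ∈ A, k v v) + (∑ u ∈ A, ∑ v ∈ A.erase u, k u v) / 2

/-- Blow-up of a multigraph at the single bridge `a`–`b`: one exceptional
vertex is inserted in the middle of the bridge. -/
def blowK (k : V → V → ℕ) (a b : V) : (V ⊕ Unit) → (V ⊕ Unit) → ℕ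
  | Sum.inl u, Sum.inl v => if (u = a ∧ v = b) ∨ (u = b ∧ v = a) then 0 else k u v
  | Sum.inl u, Sum.inr _ => if u = a ∨ u = b then 1 else 0
  | Sum.inr _, Sum.inl v => if v = a ∨ v = b then 1 else 0
  | Sum.inr _, Sum.inr _ => 0

/-- Weight function of the blow-up at one bridge: exceptional vertex has weight 0. -/
def blowW (w : V → ℕ) : V ⊕ Unit → ℕ
  | Sum.inl v => w v
  | Sum.inr _ => 0

/-- Blow-up of a multigraph at a set `S` of bridges (given as ordered pairs):
one exceptional vertex is inserted in the middle of each bridge of `S`. -/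
def blowKS (k : V → V → ℕ) (S : Finset (V × V)) :
    (V ⊕ {p : V × V // p ∈ S}) → (V ⊕ {p : V × V // p ∈ S}) → ℕ
  | Sum.inl u, Sum.inl v => if (u, v) ∈ S ∨ (v, u) ∈ S then 0 else k u v
  | Sum.inl u, Sum.inr e => if u = e.1.1 ∨ u = e.1.2 then 1 else 0
  | Sum.inr e, Sum.inl v => if v = e.1.1 ∨ v = e.1.2 then 1 else 0
  | Sum.inr _, Sum.inr _ => 0

/-- Weight function of the blow-up at a set of bridges. -/
def blowWS (w : V → ℕ) (S : Finset (V × V)) : (V ⊕ {p : V × V // p ∈ S}) → ℕ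
  | Sum.inl v => w v
  | Sum.inr _ => 0

/-- Strictly balanced multidegree of total degree `D` on the blow-up `Γ̂_S`:
balanced (with degree 1 on each exceptional vertex), and the inequality is
strict for every proper nonempty `A` such that some edge between `A` and its
complement has no exceptional endpoint. -/
def IsStrictlyBalancedBlowS (k : V → V → ℕ) (w : V → ℕ) (S : Finset (V × V)) (D : ℤ)
    (dh : (V ⊕ {p : V × V // p ∈ S}) → ℤ) : Prop :=
  IsBalanced (blowKS k S) (blowWS w S) D dh ∧
    (∀ e : {p : V × V // p ∈ S}, dh (Sum.inr e) = 1) ∧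
    ∀ A : Finset (V ⊕ {p : V × V // p ∈ S}), A ≠ ∅ → A ≠ Finset.univ →
      (∃ u v : V, Sum.inl u ∈ A ∧ Sum.inl v ∉ A ∧ 0 < blowKS k S (Sum.inl u) (Sum.inl v)) →
      mA (blowKS k S) (blowWS w S) D A < (degA dh A : ℚ)

/-- Multiplicity function of the vine graph: two vertices joined by `δ` edges,
no loops. -/
def vineK (δ : ℕ) : Fin 2 → Fin 2 → ℕ := fun u v => if u = v then 0 else δ

/-- Weight function of the vine graph with weights `g₁, g₂`. -/
def vineW (g1 g2 : ℕ) : Fin 2 → ℕ := fun v => if v = 0 then g1 else g2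

/-- The data of a stable vine graph of genus `g` with weights `g₁, g₂` and `δ` edges. -/
def StableVine (g : ℤ) (g1 g2 δ : ℕ) : Prop :=
  2 ≤ δ ∧ ((g1 = 0 ∨ g2 = 0) → 3 ≤ δ) ∧ (g1 : ℤ) + (g2 : ℤ) + (δ : ℤ) - 1 = g

/-!
Contracting the bridges does not change the genus: each class of `≈` spans a tree of bridges, so
its contraction removes exactly as many vertices as edges. If `Γ` is tree-like, `Γ²` has a single
vertex and every balanced multidegree is vacuously strictly balanced. Otherwise a non-bridge edge
lies on a cycle, so its endpoints lie in different classes and `Γ²` has at least two vertices. At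
degree `g - 1` the bound `m_A` is the integer `Σ_{v ∈ A} (w(v) - 1 + k(v,v)) + #E(A)`; orienting
the edges of `Γ²` along a total order and adding in-degrees gives a balanced multidegree that
attains this bound on the first vertex, so it is not strictly balanced.
-/

section PairSums

variable {α M : Type*} [DecidableEq α] [AddCommMonoid M]

theorem sum_sum_erase_eq_two_nsmul (r : α → ℕ) (hr : Function.Injective r)
    (f : α → α → M) (hf : ∀ a b, f a b = f b a) (s : Finset α) :
    ∑ a ∈ s, ∑ b ∈ s.erase a, f a b = 2 • ∑ a ∈ s, ∑ b ∈ s with r b < r a, f a b := by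
  have hsplit : ∀ a, ∑ b ∈ s.erase a, f a b
      = ∑ b ∈ s with r b < r a, f a b + ∑ b ∈ s with r a < r b, f a b := by
    intro a
    rw [← Finset.sum_union (Finset.disjoint_filter.2 fun _ _ h h' => lt_asymm h h')]
    refine Finset.sum_congr (Finset.ext fun b => ?_) fun _ _ => rfl
    simp only [Finset.mem_erase, Finset.mem_union, Finset.mem_filter]
    rw [← hr.ne_iff, ne_iff_lt_or_gt]
    tauto
  have hswap : ∑ a ∈ s, ∑ b ∈ s with r a < r b, f a b
      = ∑ a ∈ s, ∑ b ∈ s with r b < r a, f a b := by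
    simp only [Finset.sum_filter]
    rw [Finset.sum_comm]
    simp only [hf]
  rw [Finset.sum_congr rfl fun a _ => hsplit a, Finset.sum_add_distrib, hswap, two_nsmul]

theorem sum_erase_univ_eq_add_sum_compl [Fintype α] {A : Finset α} {c : α} (hc : c ∈ A)
    (f : α → M) : ∑ x ∈ Finset.univ.erase c, f x = ∑ x ∈ A.erase c, f x + ∑ x ∈ Aᶜ, f x := by
  rw [← Finset.sum_union (Finset.disjoint_left.2 fun x hx hx' =>
    Finset.mem_compl.1 hx' (Finset.mem_of_mem_erase hx))]
  congr 1
  ext x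
  by_cases hx : x ∈ A <;> by_cases hxc : x = c <;> simp_all

theorem even_sum_sum_erase [Finite α] (f : α → α → ℕ) (hf : ∀ a b, f a b = f b a)
    (s : Finset α) : Even (∑ a ∈ s, ∑ b ∈ s.erase a, f a b) := by
  obtain ⟨r, hr⟩ := exists_injective_nat α
  rw [sum_sum_erase_eq_two_nsmul r hr f hf, smul_eq_mul]
  exact even_two_mul _

end PairSums

section WeightedGraph

variable {α : Type} [Fintype α] [DecidableEq α] {K : α → α → ℕ} {W : α → ℕ}

theorem two_mul_numEdges (hK : ∀ u v, K u v = K v u) :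
    2 * numEdges K = 2 * ∑ v, K v v + ∑ u, ∑ v ∈ Finset.univ.erase u, K u v := by
  obtain ⟨t, ht⟩ := even_sum_sum_erase K hK Finset.univ
  rw [numEdges, ht, ← two_mul, Nat.mul_div_cancel_left t two_pos]
  ring

theorem wA_univ (hK : ∀ u v, K u v = K v u) :
    wA K W Finset.univ = 2 * genus K W - 2 := by
  have hE := congrArg (Nat.cast (R := ℤ)) (two_mul_numEdges hK)
  push_cast at hE
  have hval : ∑ v, ∑ u ∈ Finset.univ.erase v, (K u v : ℤ)
      = ∑ u, ∑ v ∈ Finset.univ.erase u, (K u v : ℤ) := by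
    simp only [hK _ _]
  simp only [wA, genus, Finset.sum_add_distrib, Finset.sum_sub_distrib, ← Finset.mul_sum,
    Finset.sum_const, Finset.card_univ, nsmul_eq_mul, hval]
  linarith

theorem isDGeneral_of_subsingleton [Subsingleton α] (D : ℤ) : IsDGeneral K W D := by
  refine fun d hd => ⟨hd, fun A hA hAuniv => absurd ?_ hAuniv⟩
  obtain ⟨a, ha⟩ := Finset.nonempty_of_ne_empty hA
  exact Finset.eq_univ_of_forall fun x => Subsingleton.elim a x ▸ ha

def orientedBound (K : α → α → ℕ) (W : α → ℕ) (r : α → ℕ) (A : Finset α) : ℤ :=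
  ∑ c ∈ A, ((W c : ℤ) - 1 + K c c + ∑ x ∈ A with r x < r c, (K x c : ℤ))

theorem wA_eq_two_mul_orientedBound_add_deltaA (hK : ∀ u v, K u v = K v u) (r : α → ℕ)
    (hr : Function.Injective r) (A : Finset α) :
    wA K W A = 2 * orientedBound K W r A + deltaA K A := by
  have hinner := sum_sum_erase_eq_two_nsmul r hr (fun c x => (K x c : ℤ))
    (fun a b => by rw [hK]) A
  have hdelta : deltaA K A = ∑ c ∈ A, ∑ x ∈ Aᶜ, (K x c : ℤ) := by
    simp only [deltaA, hK _ _]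
  rw [wA, orientedBound, hdelta,
    Finset.sum_congr rfl fun c hc => by rw [sum_erase_univ_eq_add_sum_compl hc]]
  simp only [Finset.sum_add_distrib, Finset.sum_sub_distrib, ← Finset.mul_sum,
    Finset.sum_const, nsmul_eq_mul, Nat.cast_ofNat] at hinner ⊢
  linarith

theorem mA_genus_sub_one_eq_orientedBound (hK : ∀ u v, K u v = K v u)
    (hg : genus K W ≠ 1) (r : α → ℕ) (hr : Function.Injective r) (A : Finset α) :
    mA K W (genus K W - 1) A = orientedBound K W r A := by
  have hg' : (genus K W : ℚ) - 1 ≠ 0 := sub_ne_zero.2 (by exact_mod_cast hg)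
  rw [mA, wA_eq_two_mul_orientedBound_add_deltaA hK r hr A]
  push_cast
  field_simp
  ring

def orientedDegree (K : α → α → ℕ) (W : α → ℕ) (r : α → ℕ) (c : α) : ℤ :=
  (W c : ℤ) - 1 + K c c + ∑ x with r x < r c, (K x c : ℤ)

theorem degA_orientedDegree (r : α → ℕ) (A : Finset α) :
    degA (orientedDegree K W r) A
      = orientedBound K W r A + ∑ c ∈ A, ∑ x ∈ Aᶜ with r x < r c, (K x c : ℤ) := by
  simp only [degA, orientedDegree, orientedBound, ← Finset.sum_add_distrib, add_assoc]
  refine Finset.sum_congr rfl fun c _ => ?_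
  simp only [Finset.sum_filter]
  rw [← Finset.sum_add_sum_compl A]

theorem not_isDGeneral_genus_sub_one [Nontrivial α] (hK : ∀ u v, K u v = K v u)
    (hg : 2 ≤ genus K W) : ¬ IsDGeneral K W (genus K W - 1) := by
  obtain ⟨r, hr⟩ := exists_injective_nat α
  obtain ⟨c₀, -, hc₀⟩ := Finset.exists_min_image Finset.univ r Finset.univ_nonempty
  have hmA := mA_genus_sub_one_eq_orientedBound hK (by omega) r hr (W := W)
  have hdeg := degA_orientedDegree (K := K) (W := W) r
  have hbound_univ : orientedBound K W r Finset.univ = genus K W - 1 := by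
    have h := wA_eq_two_mul_orientedBound_add_deltaA hK r hr (W := W) Finset.univ
    rw [wA_univ hK, deltaA, Finset.compl_univ] at h
    simp only [Finset.sum_empty, Finset.sum_const_zero] at h
    linarith
  have hbal : IsBalanced K W (genus K W - 1) (orientedDegree K W r) := by
    refine ⟨by simp [hdeg, hbound_univ], fun A => ?_⟩
    have : 0 ≤ ∑ c ∈ A, ∑ x ∈ Aᶜ with r x < r c, (K x c : ℤ) := by positivity
    rw [hmA, hdeg]
    exact_mod_cast le_add_of_nonneg_right this
  have htight : degA (orientedDegree K W r) {c₀} = orientedBound K W r {c₀} := by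
    rw [hdeg, add_eq_left, Finset.sum_singleton]
    exact Finset.sum_eq_zero fun x hx =>
      absurd (Finset.mem_filter.1 hx).2 (hc₀ x (Finset.mem_univ x)).not_gt
  obtain ⟨c₁, hc₁⟩ := exists_ne c₀
  intro hgen
  have hlt := (hgen _ hbal).2 {c₀} (Finset.singleton_ne_empty c₀) fun h =>
    hc₁ (Finset.mem_singleton.1 (h ▸ Finset.mem_univ c₁))
  rw [hmA, htight] at hlt
  exact lt_irrefl _ hlt

end WeightedGraph

theorem SimpleGraph.IsAcyclic.sum_degree_supp_add_two {X : Type*} [Fintype X]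
    {G : SimpleGraph X} [DecidableRel G.Adj] (hG : G.IsAcyclic) (C : G.ConnectedComponent) :
    ∑ v ∈ C.supp.toFinset, G.degree v + 2 = 2 * C.supp.toFinset.card := by
  have htree : (G.induce C.supp).IsTree := hG.isTree_connectedComponent C
  have hdeg := (G.induce C.supp).sum_degrees_eq_twice_card_edges
  have hsub : ∀ v : C.supp, (G.induce C.supp).degree v = G.degree v := fun v => by
    refine SimpleGraph.degree_induce_of_neighborSet_subset fun w hw => ?_
    rw [SimpleGraph.ConnectedComponent.mem_supp_iff, ← v.2]
    exact (SimpleGraph.ConnectedComponent.connectedComponentMk_eq_of_adj hw).symm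
  have hsum : ∑ v : C.supp, G.degree v = ∑ v ∈ C.supp.toFinset, G.degree v :=
    (Finset.sum_subtype (p := (· ∈ C.supp)) _ (fun _ => Set.mem_toFinset) (G.degree ·)).symm
  rw [Fintype.sum_congr _ _ hsub, hsum] at hdeg
  have hedges := htree.card_edgeFinset
  rw [← Set.toFinset_card] at hedges
  omega

section Bridges

omit [Fintype V]

variable {k : V → V → ℕ} {a b u v : V}

theorem graphOf_removeEdge (k : V → V → ℕ) (a b : V) :
    graphOf (removeEdge k a b) = (graphOf k).deleteEdges {s(a, b)} := by
  ext u v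
  simp only [graphOf, removeEdge, SimpleGraph.deleteEdges_adj, Set.mem_singleton_iff,
    Sym2.eq_iff]
  by_cases h : (u = a ∧ v = b) ∨ (u = b ∧ v = a) <;> simp only [h] <;> grind

theorem IsBridge.symm (hsym : ∀ u v, k u v = k v u) (h : IsBridge k a b) : IsBridge k b a :=
  ⟨h.1.symm, hsym b a ▸ h.2.1, by
    rw [graphOf_removeEdge, Sym2.eq_swap, ← graphOf_removeEdge]
    exact h.2.2⟩

theorem IsBridge.isBridge_graphOf (hconn : (graphOf k).Connected) (h : IsBridge k a b) :
    (graphOf k).IsBridge s(a, b) := by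
  by_contra hnb
  exact h.2.2 (graphOf_removeEdge k a b ▸ hconn.connected_delete_edge_of_not_isBridge hnb)

def bridgeGraph (k : V → V → ℕ) : SimpleGraph V where
  Adj := Relation.SymmGen (IsBridge k)
  symm := ⟨fun _ _ => Relation.SymmGen.symm⟩
  loopless := ⟨fun _ h => h.elim (fun h => h.1 rfl) (fun h => h.1 rfl)⟩

theorem bridgeGraph_adj : (bridgeGraph k).Adj u v ↔ IsBridge k u v ∨ IsBridge k v u :=
  Iff.rfl

theorem bridgeGraph_adj_iff (hsym : ∀ u v, k u v = k v u) :
    (bridgeGraph k).Adj u v ↔ IsBridge k u v :=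
  ⟨fun h => (bridgeGraph_adj.1 h).elim id (IsBridge.symm hsym), Or.inl⟩

theorem bridgeGraph_le_graphOf : bridgeGraph k ≤ graphOf k := fun _ _ h =>
  (bridgeGraph_adj.1 h).elim (fun h => ⟨h.1, Or.inl (h.2.1 ▸ one_pos)⟩)
    (fun h => ⟨h.1.symm, Or.inr (h.2.1 ▸ one_pos)⟩)

theorem isBridge_graphOf_of_mem_edgeSet (hconn : (graphOf k).Connected) {e : Sym2 V}
    (he : e ∈ (bridgeGraph k).edgeSet) : (graphOf k).IsBridge e := by
  induction e with
  | h a b =>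
    rcases bridgeGraph_adj.1 he with h | h
    · exact h.isBridge_graphOf hconn
    · exact Sym2.eq_swap ▸ h.isBridge_graphOf hconn

theorem bridgeGraph_isAcyclic (hconn : (graphOf k).Connected) : (bridgeGraph k).IsAcyclic :=
  SimpleGraph.isAcyclic_iff_forall_isBridge.2 fun _ he =>
    (isBridge_graphOf_of_mem_edgeSet hconn he).anti bridgeGraph_le_graphOf

theorem mk_eq_mk_iff_reachable :
    Quotient.mk (contractSetoid k) u = Quotient.mk (contractSetoid k) v ↔
      (bridgeGraph k).Reachable u v := by
  rw [Quotient.eq, SimpleGraph.reachable_iff_reflTransGen]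
  change Relation.EqvGen _ u v ↔ _
  rw [← Relation.EqvGen.reflTransGen_symmGen]
  rfl

theorem mk_ne_mk_of_not_isBridge (hsym : ∀ u v, k u v = k v u) (hconn : (graphOf k).Connected)
    (huv : u ≠ v) (hk : 0 < k u v) (hnb : ¬ IsBridge k u v) :
    Quotient.mk (contractSetoid k) u ≠ Quotient.mk (contractSetoid k) v := by
  intro h
  -- a path of bridges from `u` to `v` closes up with the edge `vu` to a cycle through a bridge
  obtain ⟨p, hp⟩ := (mk_eq_mk_iff_reachable.1 h).exists_isPath
  have hvu : s(v, u) ∉ p.edges := fun he =>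
    hnb ((bridgeGraph_adj_iff hsym).1 ((p.edges_subset_edgeSet he).symm))
  obtain ⟨q, hq, hqp⟩ : ∃ q : (graphOf k).Walk u v, q.IsPath ∧ q.edges = p.edges :=
    ⟨_, hp.transfer _, p.edges_transfer fun _ he =>
      SimpleGraph.edgeSet_mono bridgeGraph_le_graphOf (p.edges_subset_edgeSet he)⟩
  have hadj : (graphOf k).Adj v u := ⟨huv.symm, Or.inr hk⟩
  have hcycle : (SimpleGraph.Walk.cons hadj q).IsCycle :=
    SimpleGraph.Walk.cons_isCycle_iff _ _ |>.2 ⟨hq, hqp ▸ hvu⟩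
  obtain ⟨e, he⟩ := List.exists_mem_of_ne_nil p.edges
    (SimpleGraph.Walk.edges_eq_nil.not.2 (SimpleGraph.Walk.not_nil_of_ne huv))
  refine (isBridge_graphOf_of_mem_edgeSet hconn (p.edges_subset_edgeSet he))
    |>.notMem_edges_of_isCycle hcycle ?_
  rw [SimpleGraph.Walk.edges_cons, hqp]
  exact List.mem_cons_of_mem _ he

theorem subsingleton_V2 (hconn : (graphOf k).Connected)
    (htree : ∀ u v : V, u ≠ v → 0 < k u v → IsBridge k u v) : Subsingleton (V2 k) := by
  have hle : graphOf k ≤ bridgeGraph k := fun u v ⟨hne, h⟩ =>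
    h.elim (fun h => Or.inl (htree u v hne h)) (fun h => Or.inr (htree v u hne.symm h))
  exact ⟨fun c c' => Quotient.inductionOn₂ c c' fun u v =>
    mk_eq_mk_iff_reachable.2 ((hconn.preconnected u v).mono hle)⟩

end Bridges

section Fibers

variable {k : V → V → ℕ} {u : V}

theorem fiber_mk (v : V) :
    fiber k (Quotient.mk _ v) = ((bridgeGraph k).connectedComponentMk v).supp.toFinset := by
  ext u
  simp [fiber, SimpleGraph.ConnectedComponent.mem_supp_iff, mk_eq_mk_iff_reachable]

theorem sum_degree_fiber_add_two (hconn : (graphOf k).Connected) (c : V2 k) :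
    ∑ v ∈ fiber k c, (bridgeGraph k).degree v + 2 = 2 * (fiber k c).card := by
  induction c using Quotient.inductionOn with
  | h v =>
    rw [fiber_mk]
    convert (bridgeGraph_isAcyclic hconn).sum_degree_supp_add_two _

theorem card_isBridge_fiber_erase (hsym : ∀ u v, k u v = k v u) {c : V2 k}
    (hu : u ∈ fiber k c) :
    #{v ∈ (fiber k c).erase u | IsBridge k u v} = (bridgeGraph k).degree u := by
  rw [← SimpleGraph.card_neighborFinset_eq_degree]
  congr 1
  ext v
  simp only [Finset.mem_filter, Finset.mem_erase, SimpleGraph.mem_neighborFinset,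
    bridgeGraph_adj_iff hsym, fiber, Finset.mem_univ, true_and] at hu ⊢
  exact ⟨fun h => h.2, fun h => ⟨⟨h.1.symm, (mk_eq_mk_iff_reachable.2
    ((bridgeGraph_adj_iff hsym).2 h).reachable).symm.trans hu⟩, h⟩⟩

end Fibers

section Contraction

variable {k : V → V → ℕ} {w : V → ℕ}

theorem sum_sum_fiber {M : Type*} [AddCommMonoid M] (k : V → V → ℕ) (g : V → M) :
    ∑ c : V2 k, ∑ v ∈ fiber k c, g v = ∑ v, g v :=
  Finset.sum_fiberwise Finset.univ _ g

theorem k2_symm (hsym : ∀ u v, k u v = k v u) (c c' : V2 k) : k2 k c c' = k2 k c' c := by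
  unfold k2
  by_cases h : c = c'
  · subst h; rfl
  · rw [if_neg h, if_neg (Ne.symm h), Finset.sum_comm]
    simp only [hsym _ _]

theorem two_mul_k2_self (hsym : ∀ u v, k u v = k v u) (c : V2 k) :
    2 * k2 k c c = 2 * ∑ v ∈ fiber k c, k v v
      + ∑ u ∈ fiber k c, ∑ v ∈ (fiber k c).erase u, if IsBridge k u v then 0 else k u v := by
  obtain ⟨t, ht⟩ := even_sum_sum_erase (fun u v => if IsBridge k u v then 0 else k u v)
    (fun u v => by
      by_cases h : IsBridge k u v
      · simp [h, h.symm hsym]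
      · simp [h, mt (IsBridge.symm hsym) h, hsym u v]) (fiber k c)
  simp only [k2, if_true, ht, ← two_mul, Nat.mul_div_cancel_left t two_pos]
  ring

theorem sum_k2_erase (c : V2 k) :
    ∑ c' ∈ Finset.univ.erase c, (k2 k c' c : ℤ)
      = ∑ v ∈ fiber k c, ∑ u ∈ (fiber k c)ᶜ, (k u v : ℤ) := by
  have hoff : ∀ c' ∈ Finset.univ.erase c, (k2 k c' c : ℤ)
      = ∑ u ∈ fiber k c', ∑ v ∈ fiber k c, (k u v : ℤ) := fun c' hc' => by
    rw [k2, if_neg (Finset.ne_of_mem_erase hc')]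
    push_cast
    rfl
  rw [Finset.sum_congr rfl hoff, Finset.sum_erase_eq_sub (Finset.mem_univ c),
    sum_sum_fiber, ← Finset.sum_compl_add_sum (fiber k c), add_sub_cancel_right,
    Finset.sum_comm]

theorem sum_sum_erase_fiber_eq_add_sum_degree (hsym : ∀ u v, k u v = k v u) (c : V2 k) :
    ∑ v ∈ fiber k c, ∑ u ∈ (fiber k c).erase v, k u v
      = ∑ u ∈ fiber k c, ∑ v ∈ (fiber k c).erase u, (if IsBridge k u v then 0 else k u v)
        + ∑ u ∈ fiber k c, (bridgeGraph k).degree u := by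
  calc ∑ v ∈ fiber k c, ∑ u ∈ (fiber k c).erase v, k u v
      = ∑ u ∈ fiber k c, ∑ v ∈ (fiber k c).erase u, k u v :=
        Finset.sum_congr rfl fun _ _ => Finset.sum_congr rfl fun _ _ => hsym _ _
    _ = ∑ u ∈ fiber k c, (∑ v ∈ (fiber k c).erase u, (if IsBridge k u v then 0 else k u v)
          + #{v ∈ (fiber k c).erase u | IsBridge k u v}) := by
        refine Finset.sum_congr rfl fun u _ => ?_
        rw [Finset.card_filter, ← Finset.sum_add_distrib]
        refine Finset.sum_congr rfl fun v _ => ?_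
        by_cases h : IsBridge k u v
        · simp [h, h.2.1]
        · simp [h]
    _ = _ := by
        rw [Finset.sum_add_distrib]
        exact congrArg _ (Finset.sum_congr rfl fun u hu => card_isBridge_fiber_erase hsym hu)

theorem wA_k2_singleton (hsym : ∀ u v, k u v = k v u) (hconn : (graphOf k).Connected)
    (c : V2 k) : wA (k2 k) (w2 k w) {c} = wA k w (fiber k c) := by
  have hloops := congrArg (Nat.cast (R := ℤ)) (two_mul_k2_self hsym c)
  have hinner := congrArg (Nat.cast (R := ℤ)) (sum_sum_erase_fiber_eq_add_sum_degree hsym c)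
  have hdeg := congrArg (Nat.cast (R := ℤ)) (sum_degree_fiber_add_two hconn c)
  push_cast at hloops hinner hdeg
  have hsplit : ∑ v ∈ fiber k c, ∑ u ∈ Finset.univ.erase v, (k u v : ℤ)
      = ∑ v ∈ fiber k c, ∑ u ∈ (fiber k c).erase v, (k u v : ℤ)
        + ∑ v ∈ fiber k c, ∑ u ∈ (fiber k c)ᶜ, (k u v : ℤ) := by
    rw [← Finset.sum_add_distrib]
    exact Finset.sum_congr rfl fun v hv => sum_erase_univ_eq_add_sum_compl hv _
  rw [wA, wA, Finset.sum_singleton, sum_k2_erase]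
  simp only [w2, Finset.sum_add_distrib, Finset.sum_sub_distrib, ← Finset.mul_sum,
    Finset.sum_const, nsmul_eq_mul]
  push_cast
  linarith

theorem genus_k2 (hsym : ∀ u v, k u v = k v u) (hconn : (graphOf k).Connected) :
    genus (k2 k) (w2 k w) = genus k w := by
  have hsum : wA (k2 k) (w2 k w) Finset.univ = wA k w Finset.univ :=
    calc wA (k2 k) (w2 k w) Finset.univ = ∑ c, wA (k2 k) (w2 k w) {c} := by
          simp only [wA, Finset.sum_singleton]
      _ = ∑ c, wA k w (fiber k c) :=
          Finset.sum_congr rfl fun c _ => wA_k2_singleton hsym hconn c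
      _ = wA k w Finset.univ := sum_sum_fiber k _
  rw [wA_univ (k2_symm hsym), wA_univ hsym] at hsum
  linarith

end Contraction

/-- `(Γ,w)` is weakly `(g−1)`-general iff `Γ` is tree-like. -/
theorem stmt13 (V : Type) [Fintype V] [DecidableEq V] (k : V → V → ℕ) (w : V → ℕ)
    (hsym : ∀ u v, k u v = k v u) (hstab : IsStable k w) (hg : 2 ≤ genus k w) :
    IsDGeneral (k2 k) (w2 k w) (genus k w - 1) ↔
      ∀ u v : V, u ≠ v → 0 < k u v → IsBridge k u v := by
  have hconn := hstab.1
  constructor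
  · intro hgen
    by_contra! hnt
    obtain ⟨u, v, huv, hk, hnb⟩ := hnt
    have : Nontrivial (V2 k) :=
      nontrivial_of_ne _ _ (mk_ne_mk_of_not_isBridge hsym hconn huv hk hnb)
    rw [← genus_k2 hsym hconn] at hg hgen
    exact not_isDGeneral_genus_sub_one (k2_symm hsym) hg hgen
  · intro htree
    have := subsingleton_V2 hconn htree
    exact isDGeneral_of_subsingleton _
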